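/- For every real number x with 0 < x < 1, we have exp(x²/(1 - x)) = ∏_{n=1}^{∞} (1 - x^n)^{(μ(n) - φ(n))/n}. -/

import Mathlib

/-!
Taking logarithms, it suffices that `∑ₙ (μ n - φ n) / n * log (1 - xⁿ) = x² / (1 - x)`.
Expanding `-log (1 - xⁿ) = ∑ₖ x^(nk) / k` gives an absolutely convergent double series; regrouped
along `m = nk` it becomes `-∑ₘ (xᵐ / m) ∑_{d ∣ m} (μ d - φ d)`. Since `∑_{d ∣ m} μ d = [m = 1]`
and `∑_{d ∣ m} φ d = m`, this is `-(x - x / (1 - x)) = x² / (1 - x)`.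
-/

open Filter Real Topology
open scoped ArithmeticFunction.Moebius Nat

theorem sum_divisors_moebius_sub_totient (m : ℕ) :
    ∑ d ∈ m.divisors, ((μ d : ℝ) - φ d) = (if m = 1 then 1 else 0) - m := by
  have hμ : ∑ d ∈ m.divisors, (μ d : ℝ) = if m = 1 then 1 else 0 := by
    rw [← ArithmeticFunction.one_apply (R := ℝ), ← ArithmeticFunction.coe_moebius_mul_coe_zeta,
      ArithmeticFunction.coe_mul_zeta_apply]
    simp
  rw [Finset.sum_sub_distrib, hμ, ← Nat.cast_sum, Nat.sum_totient]

theorem abs_moebius_sub_totient_le {n : ℕ} (hn : 0 < n) : |(μ n : ℝ) - φ n| ≤ 2 * n := by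
  have hμ : |(μ n : ℝ)| ≤ 1 := mod_cast ArithmeticFunction.abs_moebius_le_one
  have hφ : (φ n : ℝ) ≤ n := mod_cast Nat.totient_le n
  have hn1 : (1 : ℝ) ≤ n := mod_cast hn
  calc |(μ n : ℝ) - φ n| ≤ |(μ n : ℝ)| + φ n := by
        simpa using abs_sub (μ n : ℝ) (φ n)
    _ ≤ 2 * n := by linarith

theorem tendsto_sum_Icc_one_of_hasSum_pnat {M : Type*} [AddCommMonoid M] [TopologicalSpace M]
    {f : ℕ → M} {a : M} (h : HasSum (fun n : ℕ+ => f n) a) :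
    Tendsto (fun N => ∑ n ∈ Finset.Icc 1 N, f n) atTop (𝓝 a) := by
  refine (hasSum_pnat_iff_hasSum_succ.mp h).tendsto_sum_nat.congr fun N => ?_
  rw [← Finset.Ico_add_one_right_eq_Icc, Finset.sum_Ico_eq_sum_range]
  simp [add_comm]

noncomputable def lambertLogTerm (c : ℕ → ℝ) (x : ℝ) (n k : ℕ) : ℝ :=
  c n * x ^ (n * k) / (n * k : ℕ)

section lambertLogTerm

variable {c : ℕ → ℝ} {x : ℝ}

theorem summable_lambertLogTerm {K : ℝ} (hc : ∀ n : ℕ+, |c n| ≤ K * n) (hx : |x| < 1) :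
    Summable fun p : ℕ+ × ℕ+ => lambertLogTerm c x p.1 p.2 := by
  have hK : 0 ≤ K := by simpa using (abs_nonneg _).trans (hc 1)
  have hgeom := (summable_prod_mul_pow 0 (r := |x|) (by simpa using hx)).mul_left K
  refine .of_norm_bounded hgeom fun ⟨n, k⟩ => ?_
  have hn : (0 : ℝ) < n := by positivity
  have hk : (1 : ℝ) ≤ k := mod_cast k.2
  calc ‖lambertLogTerm c x n k‖ = |c n| * |x| ^ ((n : ℕ) * k) / (n * k) := by
        simp [lambertLogTerm]
    _ ≤ K * n * |x| ^ ((n : ℕ) * k) / (n * 1) := by gcongr; exact hc n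
    _ = K * ((k : ℝ) ^ 0 * |x| ^ ((n : ℕ) * k)) := by field_simp

theorem hasSum_lambertLogTerm_row (hx : |x| < 1) (n : ℕ+) :
    HasSum (fun k : ℕ+ => lambertLogTerm c x n k) (-(log (1 - x ^ (n : ℕ)) * (c n / n))) := by
  have hxn : |x ^ (n : ℕ)| < 1 := by
    rw [abs_pow]; exact pow_lt_one₀ (abs_nonneg x) hx n.ne_zero
  rw [hasSum_pnat_iff_hasSum_succ, ← neg_mul, mul_comm]
  refine ((hasSum_pow_div_log_of_abs_lt_one hxn).mul_left (c n / n)).congr_fun fun k => ?_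
  simp only [lambertLogTerm, ← pow_mul]
  push_cast
  rw [div_mul_div_comm]

theorem sum_divisorsAntidiagonal_lambertLogTerm (m : ℕ) :
    ∑ p ∈ m.divisorsAntidiagonal, lambertLogTerm c x p.1 p.2 =
      (∑ d ∈ m.divisors, c d) * x ^ m / m := by
  rw [← Nat.sum_divisorsAntidiagonal (fun d _ => c d), Finset.sum_mul, Finset.sum_div]
  refine Finset.sum_congr rfl fun p hp => ?_
  rw [lambertLogTerm, (Nat.mem_divisorsAntidiagonal.mp hp).1]

theorem hasSum_log_one_sub_pow_mul {K s : ℝ} (hc : ∀ n : ℕ+, |c n| ≤ K * n) (hx : |x| < 1)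
    (hs : HasSum (fun m : ℕ+ => (∑ d ∈ (m : ℕ).divisors, c d) * x ^ (m : ℕ) / m) s) :
    HasSum (fun n : ℕ+ => log (1 - x ^ (n : ℕ)) * (c n / n)) (-s) := by
  have hsum := (summable_lambertLogTerm hc hx).hasSum
  have hrows := hsum.prod_fiberwise fun n => hasSum_lambertLogTerm_row hx n
  have hdiag : HasSum (fun m : ℕ+ => (∑ d ∈ (m : ℕ).divisors, c d) * x ^ (m : ℕ) / m) _ :=
    (sigmaAntidiagonalEquivProd.hasSum_iff.mpr hsum).sigma fun m => by
      rw [← sum_divisorsAntidiagonal_lambertLogTerm, ← Finset.sum_coe_sort]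
      exact hasSum_fintype _
  rw [hdiag.unique hs] at hrows
  simpa only [neg_neg] using hrows.neg

end lambertLogTerm

theorem hasSum_sum_divisors_moebius_sub_totient_mul_pow_div {x : ℝ} (hx : |x| < 1) :
    HasSum (fun m : ℕ+ => (∑ d ∈ (m : ℕ).divisors, ((μ d : ℝ) - φ d)) * x ^ (m : ℕ) / m)
      (-(x ^ 2 / (1 - x))) := by
  have hone : HasSum (fun m : ℕ+ => if m = 1 then x else 0) x := hasSum_ite_eq 1 x
  have hgeom : HasSum (fun m : ℕ+ => x ^ (m : ℕ)) (x / (1 - x)) := by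
    rw [hasSum_pnat_iff_hasSum_succ]
    simpa [pow_succ', div_eq_mul_inv] using (hasSum_geometric_of_abs_lt_one hx).mul_left x
  have hx1 : 1 - x ≠ 0 := by linarith [(abs_lt.mp hx).2]
  have hsum : x - x / (1 - x) = -(x ^ 2 / (1 - x)) := by
    field_simp
    ring
  refine hsum ▸ (hone.sub hgeom).congr_fun fun m => ?_
  rw [sum_divisors_moebius_sub_totient]
  simp only [PNat.coe_eq_one_iff]
  split_ifs with h
  · simp [h]
  · field_simp
    ring

/-- For 0 < x < 1, exp(x²/(1-x)) = ∏_{n=1}^∞ (1 - x^n)^((μ(n) - φ(n))/n). -/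
theorem exp_eq_moebius_totient_product (x : ℝ) (hx0 : 0 < x) (hx1 : x < 1) :
    Filter.Tendsto
      (fun N : ℕ => ∏ n ∈ Finset.Icc 1 N,
        (1 - x ^ n) ^
          (((ArithmeticFunction.moebius n : ℝ) - (Nat.totient n : ℝ)) / (n : ℝ)))
      Filter.atTop (nhds (Real.exp (x ^ 2 / (1 - x)))) := by
  have hx : |x| < 1 := abs_lt.mpr ⟨by linarith, hx1⟩
  have hlog := hasSum_log_one_sub_pow_mul (c := fun n => (μ n : ℝ) - φ n)
    (fun n => abs_moebius_sub_totient_le n.pos) hx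
    (hasSum_sum_divisors_moebius_sub_totient_mul_pow_div hx)
  rw [neg_neg] at hlog
  refine ((continuous_exp.tendsto _).comp (tendsto_sum_Icc_one_of_hasSum_pnat
    (f := fun n => log (1 - x ^ n) * (((μ n : ℝ) - φ n) / n)) hlog)).congr fun N => ?_
  rw [Function.comp_apply, exp_sum]
  refine Finset.prod_congr rfl fun n hn => (rpow_def_of_pos (sub_pos.mpr ?_) _).symm
  exact pow_lt_one₀ hx0.le hx1 (by simp at hn; omega)
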